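/- Define δ_n : ((ℕ → ℕ) → ℕ) by δ_n p = p^i(0) where i is the least i ≤ 2^n such that for all 0-1 sequences s of length n, T'(s, p^{i+1}(0)) → T'(s, p^i(0)). Let ω̃, q̃ : (ℕ → ℕ) → ℕ be arbitrary, let E be an explicitly controlled product for ω̃ of the selection functions s ↦ δ_{|s|} (over X = R = ℕ), and set β = E ⟨⟩ q̃. Then β is an approximate Skolem function: for all n ≤ ω̃ β, all 0-1 sequences s of length n, and all k ≤ q̃ β, T'(s, k) → T'(s, β n). -/

import Mathlib

/-- The Erdős–Rado relation `≺` on ℕ determined by the symmetric colouring `c`: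
`j ≺ i` iff `j < i` and `c k i = c k j` for every `k ≺ j`. -/
def ERprec (c : ℕ → ℕ → Bool) (j i : ℕ) : Prop :=
  ∃ _ : j < i, ∀ k, ERprec c k j → c k i = c k j
termination_by i
decreasing_by omega

/-- `Tp c s k` is the predicate `T'(s, k)`: there is `k'` with `|s| ≤ k' ≤ k` such that
`s` is the characteristic function (with `0 = false`) of the `≺`-predecessors of `k'`
below `|s|`. -/
def Tp (c : ℕ → ℕ → Bool) (s : List Bool) (k : ℕ) : Prop :=
  ∃ k', s.length ≤ k' ∧ k' ≤ k ∧ ∀ i (h : i < s.length), (s[i]'h = false ↔ ERprec c i k')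

/-- `TB c β s` is `T^β(s) := T'(s, β |s|)`. -/
def TB (c : ℕ → ℕ → Bool) (β : ℕ → ℕ) (s : List Bool) : Prop :=
  Tp c s (β s.length)

/-- `β` is an ideal Skolem function for `T` if `T'(s,k) → T'(s, β |s|)` for all `s`, `k`. -/
def IdealSkolem (c : ℕ → ℕ → Bool) (β : ℕ → ℕ) : Prop :=
  ∀ (s : List Bool) (k : ℕ), Tp c s k → Tp c s (β s.length)

/-- `Depth c β s n` is `Depth_n(T^β_s)`: the subtree of `T^β` at `s` has a branch of
length `n`. -/
def Depth (c : ℕ → ℕ → Bool) (β : ℕ → ℕ) (s : List Bool) (n : ℕ) : Prop :=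
  ∃ t : List Bool, t.length = n ∧ TB c β (s ++ t)

/-- Prepend a single element to an infinite sequence. -/
def consSeq {X : Type*} (x : X) (α : ℕ → X) : ℕ → X
  | 0 => x
  | n + 1 => α n

/-- The canonical infinite extension `ŝ` of a finite sequence `s` by the distinguished
element `z`. -/
def extSeq {X : Type*} (z : X) (s : List X) : ℕ → X :=
  fun n => s.getD n z

/-- Concatenation `t * α` of a finite sequence `t` with an infinite sequence `α`. -/
def prependSeq {X : Type*} (t : List X) (α : ℕ → X) : ℕ → X :=
  fun n => t.getD n (α (n - t.length))

/-- The initial segment `α|n` of the infinite sequence `α`, of length `n`. -/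
def initSeg {X : Type*} (α : ℕ → X) (n : ℕ) : List X :=
  (List.range n).map α

/-- `IsECP z ε ω E` says that `E` is an explicitly controlled product of the selection
functions `ε_s : (X → R) → X` for the control functional `ω`:  `E s q = 0` (the constant
`z` sequence) if `ω ŝ < |s|`, and otherwise `E s q = a * E (s * a) q_a` where
`a = ε_s (fun x => q_x (E (s * x) q_x))` and `q_x α = q (x * α)`. -/
def IsECP {X R : Type*} (z : X) (ε : List X → (X → R) → X) (ω : (ℕ → X) → ℕ)
    (E : List X → ((ℕ → X) → R) → ℕ → X) : Prop :=
  ∀ (s : List X) (q : (ℕ → X) → R),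
    (ω (extSeq z s) < s.length → E s q = fun _ => z) ∧
    (¬ ω (extSeq z s) < s.length →
      E s q =
        (let a := ε s (fun x => q (consSeq x (E (s ++ [x]) (fun α => q (consSeq x α)))));
         consSeq a (E (s ++ [a]) (fun α => q (consSeq a α)))))

open Classical in
/-- The selection function interpreting `Π⁰₁` countable choice for the Skolem
function. -/
noncomputable def deltaSel (c : ℕ → ℕ → Bool) (n : ℕ) (p : ℕ → ℕ) : ℕ :=
  if h : ∃ i, ∀ s : List Bool, s.length = n →
      (Tp c s (p^[i + 1] 0) → Tp c s (p^[i] 0))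
  then p^[Nat.find h] 0 else 0


lemma Tp_mono (c : ℕ → ℕ → Bool) {s : List Bool} {k k' : ℕ} (h : k ≤ k') :
    Tp c s k → Tp c s k' := fun ⟨k0, h1, h2, h3⟩ => ⟨k0, h1, h2.trans h, h3⟩

lemma deltaSel_exists (c : ℕ → ℕ → Bool) (n : ℕ) (p : ℕ → ℕ) :
    ∃ i, ∀ s : List Bool, s.length = n → (Tp c s (p^[i + 1] 0) → Tp c s (p^[i] 0)) := by
  by_contra h
  push_neg at h
  choose f hf1 hf2 hf3 using h
  have smono : StrictMono (fun i => p^[i] 0) := by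
    apply strictMono_nat_of_lt_succ
    intro i
    by_contra hle
    push_neg at hle
    exact hf3 i (Tp_mono c hle (hf2 i))
  have finj : Function.Injective fun i => (⟨f i, hf1 i⟩ : {s : List Bool // s.length = n}) := by
    intro i j hij
    simp only [Subtype.mk.injEq] at hij
    by_contra hne
    rcases Nat.lt_or_ge i j with h | h
    · exact hf3 j (hij ▸ Tp_mono c (smono.monotone (by omega : i + 1 ≤ j)) (hf2 i))
    · have h' : j < i := by omega
      exact hf3 i (hij ▸ Tp_mono c (smono.monotone (by omega : j + 1 ≤ i)) (hf2 j))
  have : Finite {s : List Bool // s.length = n} := by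
    apply Finite.of_injective (fun s => (fun i : Fin n => s.val.getD i false))
    intro ⟨a, ha⟩ ⟨b, hb⟩ hab
    simp only [Subtype.mk.injEq]
    apply List.ext_getElem (ha.trans hb.symm)
    intro i h1 h2
    have := congrFun hab ⟨i, by omega⟩
    simpa [List.getD_eq_getElem?_getD, List.getElem?_eq_getElem, h1, h2] using this
  exact not_injective_infinite_finite _ finj

open Classical in
lemma deltaSel_spec (c : ℕ → ℕ → Bool) (n : ℕ) (p : ℕ → ℕ) :
    ∀ s : List Bool, s.length = n →
      Tp c s (p (deltaSel c n p)) → Tp c s (deltaSel c n p) := by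
  intro s hs
  rw [deltaSel, dif_pos (deltaSel_exists c n p)]
  have := Nat.find_spec (deltaSel_exists c n p) s hs
  rwa [Function.iterate_succ_apply'] at this

lemma initSeg_length {X : Type*} (α : ℕ → X) (n : ℕ) : (initSeg α n).length = n := by
  simp [initSeg]

lemma initSeg_succ {X : Type*} (α : ℕ → X) (n : ℕ) :
    initSeg α (n + 1) = initSeg α n ++ [α n] := by
  simp [initSeg, List.range_succ]

lemma initSeg_getD_lt {X : Type*} (α : ℕ → X) {n j : ℕ} (h : j < n) (d : X) :
    (initSeg α n).getD j d = α j := by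
  rw [List.getD_eq_getElem _ _ (by simp [initSeg_length, h])]
  simp [initSeg]

lemma initSeg_getD_ge {X : Type*} (α : ℕ → X) {n j : ℕ} (h : n ≤ j) (d : X) :
    (initSeg α n).getD j d = d :=
  List.getD_eq_default _ _ (by simp [initSeg_length, h])

lemma prependSeq_nil {X : Type*} (α : ℕ → X) : prependSeq [] α = α := rfl

lemma prependSeq_snoc {X : Type*} (s : List X) (a : X) (α : ℕ → X) :
    prependSeq (s ++ [a]) α = prependSeq s (consSeq a α) := by
  funext j
  simp only [prependSeq, List.length_append, List.length_singleton]
  rcases Nat.lt_trichotomy j s.length with h | h | h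
  · rw [List.getD_eq_getElem _ _ (by simp; omega), List.getD_eq_getElem _ _ (by omega)]
    simp [List.getElem_append_left h]
  · subst h
    rw [List.getD_eq_getElem _ _ (by simp), List.getD_eq_default _ _ (le_refl _)]
    simp [consSeq]
  · rw [List.getD_eq_default _ _ (by simp; omega), List.getD_eq_default _ _ (by omega)]
    have : j - s.length = (j - (s.length + 1)) + 1 := by omega
    rw [this]
    rfl

lemma prependSeq_initSeg {X : Type*} (β : ℕ → X) (n : ℕ) :
    prependSeq (initSeg β n) (fun k => β (n + k)) = β := by
  funext j
  simp only [prependSeq, initSeg_length]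
  rcases Nat.lt_or_ge j n with h | h
  · exact initSeg_getD_lt β h _
  · rw [initSeg_getD_ge β h]
    congr 1
    omega

lemma ecp_initSeg (c : ℕ → ℕ → Bool)
    (omegat qt : (ℕ → ℕ) → ℕ) (E : List ℕ → ((ℕ → ℕ) → ℕ) → ℕ → ℕ)
    (hE : IsECP 0 (fun s => deltaSel c s.length) omegat E) :
    ∀ m ≤ omegat (E [] qt),
      E (initSeg (E [] qt) m) (fun α => qt (prependSeq (initSeg (E [] qt) m) α))
        = fun k => E [] qt (m + k) := by
  set β := E [] qt with hβ
  intro m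
  induction m with
  | zero =>
    intro _
    have h0 : initSeg β 0 = ([] : List ℕ) := rfl
    rw [h0]
    have : (fun α => qt (prependSeq ([] : List ℕ) α)) = qt := by
      funext α; rw [prependSeq_nil]
    rw [this]
    funext k
    simp [hβ]
  | succ m ih =>
    intro hm
    have ihm := ih (by omega)
    set Qm := fun α => qt (prependSeq (initSeg β m) α) with hQm
    have hnot : ¬ omegat (extSeq 0 (initSeg β m)) < (initSeg β m).length := by
      rw [initSeg_length]
      intro hlt
      have hz := (hE (initSeg β m) Qm).1 (by rwa [initSeg_length])
      have hzero : ∀ k, β (m + k) = 0 := by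
        intro k
        have := congrFun (ihm.symm.trans hz) k
        exact this
      have hext : β = extSeq 0 (initSeg β m) := by
        funext j
        rcases Nat.lt_or_ge j m with hj | hj
        · rw [extSeq, initSeg_getD_lt β hj]
        · rw [extSeq, initSeg_getD_ge β hj]
          have := hzero (j - m)
          rwa [Nat.add_sub_cancel' hj] at this
        
      rw [← hext] at hlt
      omega
    have hu := (hE (initSeg β m) Qm).2 hnot
    simp only at hu
    rw [ihm] at hu
    have ha : β m = deltaSel c (initSeg β m).length fun x =>
        Qm (consSeq x (E (initSeg β m ++ [x]) fun α => Qm (consSeq x α))) := by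
      have := congrFun hu 0
      exact this
    rw [initSeg_succ]
    have hcons : (fun α => qt (prependSeq (initSeg β m ++ [β m]) α))
        = fun α => Qm (consSeq (β m) α) := by
      funext α
      rw [prependSeq_snoc]
    rw [hcons, ha]
    funext k
    have := congrFun hu (k + 1)
    simp only [consSeq] at this
    rw [← ha] at this ⊢
    rw [← this]
    congr 1
    omega

lemma ecp_delta (c : ℕ → ℕ → Bool)
    (omegat qt : (ℕ → ℕ) → ℕ) (E : List ℕ → ((ℕ → ℕ) → ℕ) → ℕ → ℕ)
    (hE : IsECP 0 (fun s => deltaSel c s.length) omegat E) :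
    ∀ m ≤ omegat (E [] qt), ∃ p : ℕ → ℕ,
      E [] qt m = deltaSel c m p ∧ p (E [] qt m) = qt (E [] qt) := by
  set β := E [] qt with hβ
  intro m hm
  have ihm := ecp_initSeg c omegat qt E hE m hm
  set Qm := fun α => qt (prependSeq (initSeg β m) α) with hQm
  have hnot : ¬ omegat (extSeq 0 (initSeg β m)) < (initSeg β m).length := by
    rw [initSeg_length]
    intro hlt
    have hz := (hE (initSeg β m) Qm).1 (by rwa [initSeg_length])
    have hzero : ∀ k, β (m + k) = 0 := fun k => congrFun (ihm.symm.trans hz) k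
    have hext : β = extSeq 0 (initSeg β m) := by
      funext j
      rcases Nat.lt_or_ge j m with hj | hj
      · rw [extSeq, initSeg_getD_lt β hj]
      · rw [extSeq, initSeg_getD_ge β hj]
        have := hzero (j - m)
        rwa [Nat.add_sub_cancel' hj] at this
    rw [← hext] at hlt
    omega
  have hu := (hE (initSeg β m) Qm).2 hnot
  simp only at hu
  rw [ihm] at hu
  set p := fun x => Qm (consSeq x (E (initSeg β m ++ [x]) fun α => Qm (consSeq x α))) with hp
  refine ⟨p, ?_, ?_⟩
  · have := congrFun hu 0
    simpa [initSeg_length, consSeq] using this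
  · have ha : β m = deltaSel c (initSeg β m).length p := congrFun hu 0
    have hpa : p (β m) = Qm (fun k => β (m + k)) := by
      rw [hp]
      simp only
      rw [ha]
      rw [← hu]
    rw [hpa, hQm]
    simp only
    rw [prependSeq_initSeg]

/-- Construction of an approximate Skolem function by the explicitly controlled
product: `β = E ⟨⟩ q̃` satisfies `T' (s, k) → T' (s, β n)` for all `n ≤ ω̃ β`, all 0-1
sequences `s` of length `n` and all `k ≤ q̃ β`. -/
theorem ecp_approximate_skolem (c : ℕ → ℕ → Bool) (hc : ∀ i j, c i j = c j i)
    (omegat qt : (ℕ → ℕ) → ℕ) (E : List ℕ → ((ℕ → ℕ) → ℕ) → ℕ → ℕ)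
    (hE : IsECP 0 (fun s => deltaSel c s.length) omegat E) :
    ∀ n ≤ omegat (E [] qt), ∀ s : List Bool, s.length = n →
      ∀ k ≤ qt (E [] qt), Tp c s k → Tp c s (E [] qt n) := by

  intro n hn s hs k hk hTk
  obtain ⟨p, hp1, hp2⟩ := ecp_delta c omegat qt E hE n hn
  have h1 : Tp c s (qt (E [] qt)) := Tp_mono c hk hTk
  rw [← hp2] at h1
  rw [hp1] at h1 ⊢
  exact deltaSel_spec c n p s hs h1
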